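/- Let (Γ, S) be a Thue system with rules S₁, …, S_m, each rule consisting of two words of length exactly 2, and such that for every rule {a₁a₂, b₁b₂} ∈ S either a₁ = b₁ or a₂ = b₂. Let ⊢, ⊣, x₁, …, x_m and a blank symbol □ be distinct symbols not in Γ, let Δ₁ = {⊢, ⊣, x₁, …, x_m}, Δ₂ = (Γ ∪ {□}) × (Γ ∪ {□}), and Δ = Δ₁ ∪ Δ₂. Let E ⊆ Δ × Δ consist exactly of: (i) ((a, b), (b, c)) for all a, c ∈ Γ ∪ {□} and b ∈ Γ; (ii) (⊢, (□, a)) for all a ∈ Γ; (iii) ((a, □), ⊣) for all a ∈ Γ; and (iv) for each i with S_i = {a₁a₂, b₁b₂}: ((c, a₁), x_i), ((c, b₁), x_i), (x_i, (a₂, c)) and (x_i, (b₂, c)) for all c ∈ Γ ∪ {□}. For a word a₁a₂…a_n ∈ Γⁿ (n ≥ 1), define ψ(a₁…a_n) = ⊢ (□, a₁)(a₁, a₂)(a₂, a₃)…(a_{n−1}, a_n)(a_n, □) ⊣ ∈ Δ^{n+3}. Then for all s, t ∈ Γⁿ: s ⇔*_S t if and only if there exists a sequence ψ(s) = u⁰,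 u¹, …, u^l = ψ(t) of H-words over H = (Δ, E), each of length n + 3, in which each u^j differs from u^{j−1} in exactly one position. -/

import Mathlib

/-- The alphabet `Δ`: the special symbols `⊢` (`left`), `⊣` (`right`),
`x₁, …, x_m`, together with the pair symbols `(Γ ∪ {□}) × (Γ ∪ {□})`
(`□` is encoded by `none`). -/
inductive Delta (Γ : Type) (m : ℕ) : Type
  | left : Delta Γ m
  | right : Delta Γ m
  | x : Fin m → Delta Γ m
  | pair : Option Γ → Option Γ → Delta Γ m

/-- The relation `E ⊆ Δ × Δ` built from the rules `Rule i = {a₁a₂, b₁b₂}`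
(each rule is a pair of words of length two, stored as
`((a₁, a₂), (b₁, b₂))`). -/
def ERel {Γ : Type} {m : ℕ} (Rule : Fin m → (Γ × Γ) × (Γ × Γ)) :
    Delta Γ m → Delta Γ m → Prop := fun p q =>
  (∃ (a : Option Γ) (b : Γ) (c : Option Γ),
      p = Delta.pair a (some b) ∧ q = Delta.pair (some b) c) ∨
  (∃ b : Γ, p = Delta.left ∧ q = Delta.pair none (some b)) ∨
  (∃ b : Γ, p = Delta.pair (some b) none ∧ q = Delta.right) ∨
  (∃ (i : Fin m) (c : Option Γ),
      (q = Delta.x i ∧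
        (p = Delta.pair c (some (Rule i).1.1) ∨ p = Delta.pair c (some (Rule i).2.1))) ∨
      (p = Delta.x i ∧
        (q = Delta.pair (some (Rule i).1.2) c ∨ q = Delta.pair (some (Rule i).2.2) c)))

/-- `ψ(a₁…a_n) = ⊢ (□,a₁)(a₁,a₂)…(a_{n−1},a_n)(a_n,□) ⊣`. -/
def psi {Γ : Type} (m : ℕ) (s : List Γ) : List (Delta Γ m) :=
  Delta.left ::
    ((List.zip ((none : Option Γ) :: s.map some) (s.map some ++ [none])).map
      fun p => Delta.pair p.1 p.2) ++ [Delta.right]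

/-- One rewriting step of the Thue system whose rules are the unordered pairs
`{(Rule i).1, (Rule i).2}` of words of length two. -/
def SStep {Γ : Type} {m : ℕ} (Rule : Fin m → (Γ × Γ) × (Γ × Γ)) (s t : List Γ) : Prop :=
  ∃ (i : Fin m) (u v : List Γ),
    (s = u ++ [(Rule i).1.1, (Rule i).1.2] ++ v ∧
      t = u ++ [(Rule i).2.1, (Rule i).2.2] ++ v) ∨
    (s = u ++ [(Rule i).2.1, (Rule i).2.2] ++ v ∧
      t = u ++ [(Rule i).1.1, (Rule i).1.2] ++ v)

/-- Two lists differ in exactly one position. -/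
def DiffOne {α : Type} (l₁ l₂ : List α) : Prop :=
  ∃ (u v : List α) (a b : α), a ≠ b ∧ l₁ = u ++ a :: v ∧ l₂ = u ++ b :: v

/-!
An H-word `⊢ … ⊣` of length `n + 3` is read as a word of `Γⁿ` whose letters, padded by `□`,
sit in the gaps between consecutive symbols: a pair symbol `(a, b)` shows the letters on both
sides of it, and `x_i` only says that the two letters around it form a side of rule `i`.
`ψ(s)` is the H-word without any `x_i` that reads as `s`.

A rewriting step with rule `i` takes four single-symbol changes: hide the rewritten pair behind
`x_i`, change its two neighbours one at a time, and reveal the new pair. Conversely, changing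
one symbol of an H-word changes its reading by at most two rewriting steps, one for each
neighbouring `x_j`. The hypothesis on the rules guarantees that an `x_j` placed between a first
and a second letter of rule `j` still stands for a side of `j`, so readings are preserved.
-/

open Relation Function

section Sequences

variable {α : Type*} {P : α → Prop} {r : α → α → Prop} {a b : α}

theorem exists_seq_iff_reflTransGen :
    (∃ (l : ℕ) (u : ℕ → α), u 0 = a ∧ u l = b ∧ (∀ j ≤ l, P (u j)) ∧
        ∀ j < l, r (u j) (u (j + 1))) ↔
      P a ∧ ReflTransGen (fun x y => r x y ∧ P y) a b := by
  constructor
  · rintro ⟨l, u, rfl, rfl, hP, hr⟩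
    refine ⟨hP 0 l.zero_le, ?_⟩
    have : ReflTransGen (fun i j => r (u i) (u j) ∧ P (u j)) 0 l :=
      reflTransGen_of_succ_of_le _ (fun j hj => ⟨hr j hj.2, hP _ (Order.succ_le_of_lt hj.2)⟩)
        l.zero_le
    exact this.lift u fun _ _ h => h
  · rintro ⟨ha, h⟩
    induction h with
    | refl =>
      exact ⟨0, fun _ => a, rfl, rfl, fun _ _ => ha, fun _ h => absurd h (Nat.not_lt_zero _)⟩
    | @tail c d _ hcd ih =>
      obtain ⟨l, u, h0, hl, hP, hr⟩ := ih
      refine ⟨l + 1, update u (l + 1) d, by simp [h0], by simp, fun j hj => ?_, fun j hj => ?_⟩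
      · rcases hj.lt_or_eq with hj | rfl
        · simpa [update_of_ne hj.ne] using hP j (by omega)
        · simpa using hcd.2
      · rcases (Nat.lt_succ_iff.mp hj).lt_or_eq with hj | rfl
        · simpa [update_of_ne (show j ≠ l + 1 by omega), update_of_ne (show j + 1 ≠ l + 1 by omega)]
            using hr j hj
        · simpa [update_of_ne (show j ≠ j + 1 by omega), hl] using hcd.1

end Sequences

theorem DiffOne.exists_set {α : Type} {l l' : List α} (h : DiffOne l l') :
    ∃ k a b, a ≠ b ∧ l[k]? = some a ∧ l' = l.set k b := by
  obtain ⟨u, v, a, b, hab, rfl, rfl⟩ := h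
  exact ⟨u.length, a, b, hab, by simp, by simp⟩

theorem List.IsChain.rel_of_getElem? {α : Type*} {R : α → α → Prop} {l : List α}
    (h : l.IsChain R) {k : ℕ} {a b : α} (ha : l[k]? = some a) (hb : l[k + 1]? = some b) :
    R a b := by
  obtain ⟨hk, rfl⟩ := List.getElem?_eq_some_iff.mp hb
  obtain ⟨_, rfl⟩ := List.getElem?_eq_some_iff.mp ha
  exact List.isChain_iff_getElem.mp h k hk

theorem List.exists_eq_append_of_getElem? {α : Type*} {l : List α} {k : ℕ} {a b : α}
    (ha : l[k]? = some a) (hb : l[k + 1]? = some b) :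
    ∃ U V, U.length = k ∧ l = U ++ [a, b] ++ V := by
  obtain ⟨hk, rfl⟩ := List.getElem?_eq_some_iff.mp hb
  obtain ⟨_, rfl⟩ := List.getElem?_eq_some_iff.mp ha
  refine ⟨l.take k, l.drop (k + 2), by simp; omega, ?_⟩
  conv_lhs => rw [← List.take_append_drop k l, List.drop_eq_getElem_cons (by omega),
    List.drop_eq_getElem_cons hk]
  simp

theorem List.getElem?_append_pair_congr {α : Type*} (U V : List α) (a₁ a₂ b₁ b₂ : α) {k : ℕ}
    (h₁ : k ≠ U.length) (h₂ : k ≠ U.length + 1) :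
    (U ++ [a₁, a₂] ++ V)[k]? = (U ++ [b₁, b₂] ++ V)[k]? := by
  simp only [List.append_assoc, List.getElem?_append, List.length_cons, List.length_nil]
  split_ifs with h h' <;> try rfl
  rw [List.getElem?_cons, List.getElem?_cons, if_neg (by omega), if_neg (by omega),
    List.getElem?_cons, List.getElem?_cons, if_neg (by omega), if_neg (by omega)]

variable {Γ : Type} {m : ℕ} {Rule : Fin m → (Γ × Γ) × (Γ × Γ)}

section ERel

variable {p q : Delta Γ m} {c d : Option Γ} {i : Fin m}

theorem ERel.not_left : ¬ ERel Rule p .left := by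
  simp [ERel]

theorem ERel.not_right : ¬ ERel Rule .right q := by
  simp [ERel]

theorem ERel.pair_pair (a : Option Γ) (b : Γ) (c : Option Γ) :
    ERel Rule (.pair a (some b)) (.pair (some b) c) :=
  .inl ⟨a, b, c, rfl, rfl⟩

theorem ERel.of_pair_right (h : ERel Rule p (.pair c d)) :
    (p = .left ∧ c = none) ∨ (∃ a γ, p = .pair a (some γ) ∧ c = some γ) ∨
      ∃ i, p = .x i ∧ (c = some (Rule i).1.2 ∨ c = some (Rule i).2.2) := by
  simp only [ERel] at h
  aesop

theorem ERel.of_pair_left (h : ERel Rule (.pair c d) q) :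
    (q = .right ∧ d = none) ∨ (∃ γ a, q = .pair (some γ) a ∧ d = some γ) ∨
      ∃ i, q = .x i ∧ (d = some (Rule i).1.1 ∨ d = some (Rule i).2.1) := by
  simp only [ERel] at h
  aesop

theorem ERel.of_x_right (h : ERel Rule p (.x i)) :
    ∃ a γ, p = .pair a (some γ) ∧ (γ = (Rule i).1.1 ∨ γ = (Rule i).2.1) := by
  simp only [ERel] at h
  aesop

theorem ERel.of_x_left (h : ERel Rule (.x i) q) :
    ∃ γ a, q = .pair (some γ) a ∧ (γ = (Rule i).1.2 ∨ γ = (Rule i).2.2) := by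
  simp only [ERel] at h
  aesop

theorem ERel.pair_some_right {x y : Γ} (h : ERel Rule p (.pair c (some x))) :
    ERel Rule p (.pair c (some y)) := by
  simp only [ERel] at h ⊢
  aesop

theorem ERel.pair_some_left {x y : Γ} (h : ERel Rule (.pair (some x) c) q) :
    ERel Rule (.pair (some y) c) q := by
  simp only [ERel] at h ⊢
  aesop

end ERel

def Sides (Rule : Fin m → (Γ × Γ) × (Γ × Γ)) (i : Fin m) (p q : Option Γ) : Prop :=
  (p = some (Rule i).1.1 ∧ q = some (Rule i).1.2) ∨ (p = some (Rule i).2.1 ∧ q = some (Rule i).2.2)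

theorem Sides.erel_pair_x {i : Fin m} {a : Γ} {q : Option Γ} (h : Sides Rule i (some a) q)
    (c : Option Γ) : ERel Rule (.pair c (some a)) (.x i) := by
  rcases h with ⟨h, -⟩ | ⟨h, -⟩ <;> simp only [Option.some_inj] at h <;> subst h
  exacts [.inr (.inr (.inr ⟨i, c, .inl ⟨rfl, .inl rfl⟩⟩)),
    .inr (.inr (.inr ⟨i, c, .inl ⟨rfl, .inr rfl⟩⟩))]

theorem Sides.erel_x_pair {i : Fin m} {p : Option Γ} {b : Γ} (h : Sides Rule i p (some b))
    (c : Option Γ) : ERel Rule (.x i) (.pair (some b) c) := by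
  rcases h with ⟨-, h⟩ | ⟨-, h⟩ <;> simp only [Option.some_inj] at h <;> subst h
  exacts [.inr (.inr (.inr ⟨i, c, .inr ⟨rfl, .inl rfl⟩⟩)),
    .inr (.inr (.inr ⟨i, c, .inr ⟨rfl, .inr rfl⟩⟩))]

theorem Sides.reflTransGen_sStep {i : Fin m} {a₁ a₂ b₁ b₂ : Γ}
    (ha : Sides Rule i (some a₁) (some a₂)) (hb : Sides Rule i (some b₁) (some b₂))
    (U V : List Γ) : ReflTransGen (SStep Rule) (U ++ [a₁, a₂] ++ V) (U ++ [b₁, b₂] ++ V) := by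
  rcases ha with ⟨h₁, h₂⟩ | ⟨h₁, h₂⟩ <;> rcases hb with ⟨h₃, h₄⟩ | ⟨h₃, h₄⟩ <;>
    simp only [Option.some_inj] at h₁ h₂ h₃ h₄ <;> subst h₁ h₂ h₃ h₄
  · rfl
  · exact .single ⟨i, U, V, .inl ⟨rfl, rfl⟩⟩
  · exact .single ⟨i, U, V, .inr ⟨rfl, rfl⟩⟩
  · rfl

theorem SStep.length_eq {s t : List Γ} (h : SStep Rule s t) : s.length = t.length := by
  obtain ⟨i, U, V, ⟨rfl, rfl⟩ | ⟨rfl, rfl⟩⟩ := h <;> simp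

/-- Without the hypothesis on rule `i`, the letters around an `x i` could be the first letter of
one side and the second letter of the other. -/
theorem sides_of_mem {i : Fin m} {p q : Option Γ}
    (hrule : (Rule i).1.1 = (Rule i).2.1 ∨ (Rule i).1.2 = (Rule i).2.2)
    (hp : p = some (Rule i).1.1 ∨ p = some (Rule i).2.1)
    (hq : q = some (Rule i).1.2 ∨ q = some (Rule i).2.2) : Sides Rule i p q := by
  rcases hrule with h | h <;> rcases hp with rfl | rfl <;> rcases hq with rfl | rfl <;>
    simp [Sides, h]

def pairsFrom : Option Γ → List Γ → List (Delta Γ m)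
  | c, [] => [.pair c none]
  | c, a :: s => .pair c (some a) :: pairsFrom (some a) s

theorem psi_eq_pairsFrom (s : List Γ) : psi m s = .left :: pairsFrom none s ++ [.right] := by
  suffices h : ∀ c : Option Γ, ((c :: s.map some).zip (s.map some ++ [none])).map
      (fun p => Delta.pair (m := m) p.1 p.2) = pairsFrom c s by simp [psi, h]
  induction s with
  | nil => intro c; rfl
  | cons a s ih => intro c; simp [pairsFrom, ← ih]

theorem length_psi (s : List Γ) : (psi m s).length = s.length + 3 := by
  simp [psi]

theorem exists_pairsFrom_eq_cons (s : List Γ) :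
    ∃ d Q, ∀ c, pairsFrom (m := m) c s = .pair c d :: Q := by
  cases s with
  | nil => exact ⟨none, [], fun _ => rfl⟩
  | cons a s => exact ⟨some a, pairsFrom (some a) s, fun _ => rfl⟩

theorem exists_pairsFrom_append (c : Option Γ) (U : List Γ) :
    ∃ (P : List (Delta Γ m)) (ℓ : Option Γ), ∀ s, pairsFrom c (U ++ s) = P ++ pairsFrom ℓ s := by
  induction U generalizing c with
  | nil => exact ⟨[], c, fun _ => rfl⟩
  | cons a U ih =>
    obtain ⟨P, ℓ, h⟩ := ih (some a)
    exact ⟨.pair c (some a) :: P, ℓ, fun s => by simp [pairsFrom, h]⟩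

theorem isChain_pairsFrom_append_right (c : Option Γ) (a : Γ) (s : List Γ) :
    (pairsFrom c (a :: s) ++ [Delta.right]).IsChain (ERel Rule) := by
  induction s generalizing c a with
  | nil => simp [pairsFrom, ERel]
  | cons b s ih => exact .cons_cons (ERel.pair_pair c a (some b)) (ih (some a) b)

theorem isChain_psi {s : List Γ} (hs : s ≠ []) : (psi m s).IsChain (ERel Rule) := by
  obtain ⟨a, s, rfl⟩ := List.exists_cons_of_ne_nil hs
  rw [psi_eq_pairsFrom, List.cons_append]
  exact .cons_cons (.inr (.inl ⟨a, rfl, rfl⟩)) (isChain_pairsFrom_append_right none a s)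

theorem exists_psi_eq_window (U V : List Γ) :
    ∃ (P Q : List (Delta Γ m)) (ℓ r : Option Γ), ∀ c₁ c₂, psi m (U ++ [c₁, c₂] ++ V) =
      P ++ .pair ℓ (some c₁) :: .pair (some c₁) (some c₂) :: .pair (some c₂) r :: Q := by
  obtain ⟨P, ℓ, hP⟩ := exists_pairsFrom_append (m := m) none U
  obtain ⟨r, Q, hQ⟩ := exists_pairsFrom_eq_cons (m := m) V
  exact ⟨.left :: P, Q ++ [.right], ℓ, r, fun c₁ c₂ => by
    simp [psi_eq_pairsFrom, hP, pairsFrom, hQ]⟩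

def IsHWord (Rule : Fin m → (Γ × Γ) × (Γ × Γ)) (N : ℕ) (w : List (Delta Γ m)) : Prop :=
  w.length = N ∧ w.IsChain (ERel Rule)

def HMove (Rule : Fin m → (Γ × Γ) × (Γ × Γ)) (N : ℕ) (w w' : List (Delta Γ m)) : Prop :=
  DiffOne w w' ∧ IsHWord Rule N w'

theorem reflTransGen_hMove_of_replace {N : ℕ} {w w' : List (Delta Γ m)} (l₁ l₂ : List (Delta Γ m))
    (a b : Delta Γ m) (hw : w = l₁ ++ a :: l₂) (hw' : w' = l₁ ++ b :: l₂)
    (h : IsHWord Rule N w') : ReflTransGen (HMove Rule N) w w' := by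
  by_cases hab : a = b
  · rw [hw, hw', hab]
  · exact .single ⟨⟨l₁, l₂, a, b, hab, hw, hw'⟩, h⟩

theorem isChain_append_pair_some_right {P : List (Delta Γ m)} {ℓ : Option Γ} {x y : Γ}
    (h : (P ++ [Delta.pair ℓ (some x)]).IsChain (ERel Rule)) :
    (P ++ [Delta.pair ℓ (some y)]).IsChain (ERel Rule) := by
  rw [List.isChain_append] at h ⊢
  refine ⟨h.1, List.isChain_singleton _, fun p hp q hq => ?_⟩
  obtain rfl : q = .pair ℓ (some y) := by simpa using hq.symm
  exact (h.2.2 p hp _ rfl).pair_some_right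

theorem isChain_cons_pair_some_left {Q : List (Delta Γ m)} {r : Option Γ} {x y : Γ}
    (h : (Delta.pair (some x) r :: Q).IsChain (ERel Rule)) :
    (Delta.pair (some y) r :: Q).IsChain (ERel Rule) := by
  cases Q with
  | nil => exact List.isChain_singleton _
  | cons q Q =>
    rw [List.isChain_cons_cons] at h ⊢
    exact ⟨h.1.pair_some_left, h.2⟩

theorem Sides.reflTransGen_hMove_psi {i : Fin m} {a₁ a₂ b₁ b₂ : Γ}
    (ha : Sides Rule i (some a₁) (some a₂)) (hb : Sides Rule i (some b₁) (some b₂))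
    (U V : List Γ) :
    ReflTransGen (HMove Rule ((U ++ [a₁, a₂] ++ V).length + 3))
      (psi m (U ++ [a₁, a₂] ++ V)) (psi m (U ++ [b₁, b₂] ++ V)) := by
  obtain ⟨P, Q, ℓ, r, hpsi⟩ := exists_psi_eq_window (m := m) U V
  have hlen := length_psi (m := m) (U ++ [a₁, a₂] ++ V)
  have hchain := isChain_psi (Rule := Rule) (m := m) (s := U ++ [a₁, a₂] ++ V) (by simp)
  rw [hpsi] at hlen hchain
  rw [List.isChain_append_cons_cons, List.isChain_cons_cons] at hchain
  have hword : ∀ c₁ y c₂, ERel Rule (.pair ℓ (some c₁)) y → ERel Rule y (.pair (some c₂) r) →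
      IsHWord Rule ((U ++ [a₁, a₂] ++ V).length + 3)
        (P ++ .pair ℓ (some c₁) :: y :: .pair (some c₂) r :: Q) := by
    intro c₁ y c₂ h₁ h₂
    refine ⟨by simpa using hlen, ?_⟩
    rw [List.isChain_append_cons_cons, List.isChain_cons_cons]
    exact ⟨isChain_append_pair_some_right hchain.1, h₁, h₂,
      isChain_cons_pair_some_left hchain.2.2.2⟩
  rw [hpsi, hpsi]
  refine .trans (reflTransGen_hMove_of_replace (P ++ [.pair ℓ (some a₁)]) (.pair (some a₂) r :: Q)
    (.pair (some a₁) (some a₂)) (.x i) (by simp) (by simp)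
    (hword _ _ _ (ha.erel_pair_x ℓ) (ha.erel_x_pair r))) ?_
  refine .trans (reflTransGen_hMove_of_replace P (.x i :: .pair (some a₂) r :: Q)
    (.pair ℓ (some a₁)) (.pair ℓ (some b₁)) (by simp) (by simp)
    (hword _ _ _ (hb.erel_pair_x ℓ) (ha.erel_x_pair r))) ?_
  refine .trans (reflTransGen_hMove_of_replace (P ++ [.pair ℓ (some b₁), .x i]) Q
    (.pair (some a₂) r) (.pair (some b₂) r) (by simp) (by simp)
    (hword _ _ _ (hb.erel_pair_x ℓ) (hb.erel_x_pair r))) ?_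
  exact reflTransGen_hMove_of_replace (P ++ [.pair ℓ (some b₁)]) (.pair (some b₂) r :: Q)
    (.x i) (.pair (some b₁) (some b₂)) (by simp) (by simp)
    (hword _ _ _ (ERel.pair_pair _ _ _) (ERel.pair_pair _ _ _))

theorem reflTransGen_hMove_psi {s t : List Γ} (h : ReflTransGen (SStep Rule) s t) :
    ReflTransGen (HMove Rule (s.length + 3)) (psi m s) (psi m t) := by
  induction h using ReflTransGen.head_induction_on with
  | refl => rfl
  | head hst _ ih =>
    rw [hst.length_eq]
    refine .trans ?_ ih
    obtain ⟨i, U, V, ⟨rfl, rfl⟩ | ⟨rfl, rfl⟩⟩ := hst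
    · simpa using Sides.reflTransGen_hMove_psi (.inl ⟨rfl, rfl⟩) (.inr ⟨rfl, rfl⟩) U V
    · simpa using Sides.reflTransGen_hMove_psi (.inr ⟨rfl, rfl⟩) (.inl ⟨rfl, rfl⟩) U V

/-- The `j`-th letter of the word `c s □`, where `none` stands for `□` (also past the end). -/
def letterAt (c : Option Γ) (s : List Γ) : ℕ → Option Γ
  | 0 => c
  | j + 1 => s[j]?

theorem getElem?_pairsFrom (c : Option Γ) (s : List Γ) (j : ℕ) :
    (pairsFrom (m := m) c s)[j]? =
      if j ≤ s.length then some (.pair (letterAt c s j) (letterAt c s (j + 1))) else none := by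
  induction s generalizing c j with
  | nil => cases j <;> simp [pairsFrom, letterAt]
  | cons a s ih =>
    cases j with
    | zero => simp [pairsFrom, letterAt]
    | succ j =>
      rw [pairsFrom, List.getElem?_cons_succ, ih]
      cases j <;> simp [letterAt]

theorem length_pairsFrom (c : Option Γ) (s : List Γ) :
    (pairsFrom (m := m) c s).length = s.length + 1 := by
  induction s generalizing c <;> simp [pairsFrom, *]

theorem getElem?_psi (s : List Γ) (k : ℕ) :
    (psi m s)[k]? =
      if k = 0 then some .left
      else if k ≤ s.length + 1 then some (.pair (letterAt none s (k - 1)) (letterAt none s k))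
      else if k = s.length + 2 then some .right else none := by
  rw [psi_eq_pairsFrom]
  rcases k with _ | k
  · simp
  rw [List.cons_append, List.getElem?_cons_succ, List.getElem?_append, getElem?_pairsFrom,
    length_pairsFrom]
  split_ifs <;> first | omega | (simp_all [List.getElem?_singleton]; try omega)

theorem Sides.exists_reflTransGen {v : List Γ} {j : ℕ} {i : Fin m} {p q : Option Γ}
    (hv : Sides Rule i (letterAt none v j) (letterAt none v (j + 1))) (h : Sides Rule i p q) :
    ∃ v', ReflTransGen (SStep Rule) v v' ∧ v'.length = v.length ∧
      letterAt none v' j = p ∧ letterAt none v' (j + 1) = q ∧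
      ∀ k, k ≠ j → k ≠ j + 1 → letterAt none v' k = letterAt none v k := by
  have some_of_sides : ∀ {p q : Option Γ}, Sides Rule i p q → ∃ a b, p = some a ∧ q = some b := by
    rintro p q (⟨rfl, rfl⟩ | ⟨rfl, rfl⟩) <;> exact ⟨_, _, rfl, rfl⟩
  obtain ⟨a₁, a₂, ha₁, ha₂⟩ := some_of_sides hv
  obtain ⟨b₁, b₂, rfl, rfl⟩ := some_of_sides h
  obtain ⟨j, rfl⟩ : ∃ j', j = j' + 1 :=
    Nat.exists_eq_succ_of_ne_zero (by rintro rfl; simp [letterAt] at ha₁)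
  obtain ⟨U, V, rfl, rfl⟩ := List.exists_eq_append_of_getElem? ha₁ ha₂
  rw [ha₁, ha₂] at hv
  refine ⟨U ++ [b₁, b₂] ++ V, hv.reflTransGen_sStep h U V, by simp, by simp [letterAt],
    by simp [letterAt], fun k hk₁ hk₂ => ?_⟩
  rcases k with _ | k
  · rfl
  · exact List.getElem?_append_pair_congr U V _ _ _ _ (by omega) (by omega)

/-- Gap `j` of `□ v □`, holding `letterAt none v j`, lies between positions `j` and `j + 1`;
`Fits Rule v k d` says that `d` may stand at position `k` of an H-word reading as `v`. -/
def Fits (Rule : Fin m → (Γ × Γ) × (Γ × Γ)) (v : List Γ) (k : ℕ) : Delta Γ m → Prop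
  | .left => k = 0
  | .right => k = v.length + 2
  | .pair a b => ∃ j ≤ v.length, k = j + 1 ∧ a = letterAt none v j ∧ b = letterAt none v (j + 1)
  | .x i => ∃ j, k = j + 1 ∧ Sides Rule i (letterAt none v j) (letterAt none v (j + 1))

def Represents (Rule : Fin m → (Γ × Γ) × (Γ × Γ)) (v : List Γ) (u : List (Delta Γ m)) : Prop :=
  u.length = v.length + 3 ∧ ∀ k d, u[k]? = some d → Fits Rule v k d

section Fits

variable {v v' : List Γ} {k : ℕ} {A B b : Delta Γ m}

theorem not_sides_none_left {i : Fin m} {q : Option Γ} : ¬ Sides Rule i none q := by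
  simp [Sides]

theorem not_sides_none_right {i : Fin m} {p : Option Γ} : ¬ Sides Rule i p none := by
  simp [Sides]

theorem Fits.congr (h : Fits Rule v k b) (hlen : v'.length = v.length)
    (hg : ∀ j, j + 1 = k ∨ j = k → letterAt none v' j = letterAt none v j) : Fits Rule v' k b := by
  cases b with
  | left => exact h
  | right => simpa [Fits, hlen] using h
  | pair a c =>
    obtain ⟨j, hj, rfl, rfl, rfl⟩ := h
    exact ⟨j, hlen ▸ hj, rfl, (hg j (.inl rfl)).symm, (hg (j + 1) (.inr rfl)).symm⟩
  | x i =>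
    obtain ⟨j, rfl, hs⟩ := h
    exact ⟨j, rfl, by rwa [hg j (.inl rfl), hg (j + 1) (.inr rfl)]⟩

theorem Fits.eq_left_of_zero (h : Fits Rule v 0 b) : b = .left := by
  cases b <;> simp_all [Fits]

theorem Fits.eq_right_of_last (h : Fits Rule v (v.length + 2) b) : b = .right := by
  cases b with
  | left => simp [Fits] at h
  | right => rfl
  | pair => obtain ⟨j, hj, hk, -⟩ := h; omega
  | x i =>
    obtain ⟨j, hk, hs⟩ := h
    obtain rfl : j = v.length + 1 := by omega
    simp [letterAt, not_sides_none_left] at hs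

theorem Fits.eq_left_of_erel (hB : Fits Rule v 1 B) (h : ERel Rule b B) : b = .left := by
  cases B with
  | left => simp [Fits] at hB
  | right => simp [Fits] at hB
  | pair a c =>
    obtain ⟨j, -, hj, rfl, -⟩ := hB
    obtain rfl : j = 0 := by omega
    rcases h.of_pair_right with ⟨rfl, -⟩ | ⟨_, _, -, h⟩ | ⟨_, -, h | h⟩ <;> simp_all [letterAt]
  | x i =>
    obtain ⟨j, hj, hs⟩ := hB
    obtain rfl : j = 0 := by omega
    exact absurd hs not_sides_none_left

theorem Fits.eq_right_of_erel (hA : Fits Rule v (v.length + 1) A) (h : ERel Rule A b) :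
    b = .right := by
  cases A with
  | left => simp [Fits] at hA
  | right => simp [Fits] at hA
  | pair a c =>
    obtain ⟨j, -, hj, -, rfl⟩ := hA
    obtain rfl : j = v.length := by omega
    rcases h.of_pair_left with ⟨rfl, -⟩ | ⟨_, _, -, h⟩ | ⟨_, -, h | h⟩ <;> simp_all [letterAt]
  | x i =>
    obtain ⟨j, hj, hs⟩ := hA
    obtain rfl : j = v.length := by omega
    exact absurd (by simpa [letterAt] using hs) not_sides_none_right

end Fits

section Adjust

variable {v : List Γ} {j : ℕ} {d e : Option Γ} {A B : Delta Γ m}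

theorem Fits.x_of_erel {i : Fin m}
    (hrule : ∀ i, (Rule i).1.1 = (Rule i).2.1 ∨ (Rule i).1.2 = (Rule i).2.2)
    (hA : Fits Rule v j A) (hB : Fits Rule v (j + 2) B)
    (h₁ : ERel Rule A (.x i)) (h₂ : ERel Rule (.x i) B) : Fits Rule v (j + 1) (.x i) := by
  obtain ⟨a, γ, rfl, hγ⟩ := h₁.of_x_right
  obtain ⟨γ', c, rfl, hγ'⟩ := h₂.of_x_left
  obtain ⟨j₁, -, rfl, -, h₁⟩ := hA
  obtain ⟨j₂, -, hj, h₂, -⟩ := hB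
  obtain rfl : j₂ = j₁ + 2 := by omega
  refine ⟨j₁ + 1, rfl, sides_of_mem (hrule i) ?_ ?_⟩
  · rw [← h₁]; rcases hγ with rfl | rfl <;> simp
  · rw [← h₂]; rcases hγ' with rfl | rfl <;> simp

theorem Fits.exists_reflTransGen_of_erel_left
    (hrule : ∀ i, (Rule i).1.1 = (Rule i).2.1 ∨ (Rule i).1.2 = (Rule i).2.2)
    (hA : Fits Rule v j A)
    (hE : ERel Rule A (.pair d e)) :
    ∃ v₁, ReflTransGen (SStep Rule) v v₁ ∧ v₁.length = v.length ∧ letterAt none v₁ j = d ∧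
      (∀ k ≠ j, letterAt none v₁ k = letterAt none v k) ∧ Fits Rule v₁ j A := by
  rcases hE.of_pair_right with ⟨rfl, rfl⟩ | ⟨a, γ, rfl, rfl⟩ | ⟨i, rfl, hd⟩
  · obtain rfl : j = 0 := hA
    exact ⟨v, .refl, rfl, rfl, fun _ _ => rfl, rfl⟩
  · obtain ⟨j', -, rfl, -, hγ⟩ := id hA
    exact ⟨v, .refl, rfl, hγ.symm, fun _ _ => rfl, hA⟩
  · obtain ⟨j', rfl, hs⟩ := hA
    obtain ⟨v₁, hv₁, hlen, h₁, h₂, hrest⟩ :=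
      hs.exists_reflTransGen (sides_of_mem (hrule i) (hs.imp And.left And.left) hd)
    refine ⟨v₁, hv₁, hlen, h₂, fun k hk => ?_, j', rfl, ?_⟩
    · rcases eq_or_ne k j' with rfl | hk'
      · exact h₁
      · exact hrest k hk' hk
    · rw [h₁, h₂]
      exact sides_of_mem (hrule i) (hs.imp And.left And.left) hd

theorem Fits.exists_reflTransGen_of_erel_right
    (hrule : ∀ i, (Rule i).1.1 = (Rule i).2.1 ∨ (Rule i).1.2 = (Rule i).2.2)
    (hB : Fits Rule v (j + 1) B)
    (hE : ERel Rule (.pair d e) B) :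
    ∃ v₁, ReflTransGen (SStep Rule) v v₁ ∧ v₁.length = v.length ∧ letterAt none v₁ j = e ∧
      (∀ k ≠ j, letterAt none v₁ k = letterAt none v k) ∧ Fits Rule v₁ (j + 1) B := by
  rcases hE.of_pair_left with ⟨rfl, rfl⟩ | ⟨γ, a, rfl, rfl⟩ | ⟨i, rfl, he⟩
  · obtain rfl : j = v.length + 1 := by simp only [Fits] at hB; omega
    exact ⟨v, .refl, rfl, by simp [letterAt], fun _ _ => rfl, hB⟩
  · obtain ⟨j', -, hj, hγ, -⟩ := id hB
    obtain rfl : j' = j := by omega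
    exact ⟨v, .refl, rfl, hγ.symm, fun _ _ => rfl, hB⟩
  · obtain ⟨j', hj, hs⟩ := hB
    obtain rfl : j' = j := by omega
    obtain ⟨v₁, hv₁, hlen, h₁, h₂, hrest⟩ :=
      hs.exists_reflTransGen (sides_of_mem (hrule i) he (hs.imp And.right And.right))
    refine ⟨v₁, hv₁, hlen, h₁, fun k hk => ?_, j', rfl, ?_⟩
    · rcases eq_or_ne k (j' + 1) with rfl | hk'
      · exact h₂
      · exact hrest k hk hk'
    · rw [h₁, h₂]
      exact sides_of_mem (hrule i) he (hs.imp And.right And.right)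

end Adjust

section Represents

variable {v : List Γ} {u u' : List (Delta Γ m)} {j : ℕ} {d e : Option Γ} {A B : Delta Γ m}

theorem represents_psi (s : List Γ) : Represents Rule s (psi m s) := by
  refine ⟨length_psi s, fun k b hk => ?_⟩
  rw [getElem?_psi] at hk
  split_ifs at hk with h₀ h₁ h₂ <;> cases hk
  · exact h₀
  · exact ⟨k - 1, by omega, by omega, rfl, by rw [Nat.sub_add_cancel (by omega)]⟩
  · exact h₂

theorem Represents.eq_of_psi {t : List Γ} (h : Represents Rule v (psi m t)) : v = t := by
  obtain ⟨hlen, hfit⟩ := h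
  rw [length_psi] at hlen
  refine List.ext_getElem? fun j => ?_
  rcases lt_or_ge j t.length with hj | hj
  · obtain ⟨j', -, hj', -, h⟩ := hfit (j + 1) (.pair (letterAt none t j) (letterAt none t (j + 1)))
      (by rw [getElem?_psi, if_neg (by omega), if_pos (by omega)]; rfl)
    obtain rfl : j' = j := by omega
    simpa [letterAt] using h.symm
  · rw [List.getElem?_eq_none hj, List.getElem?_eq_none (by omega)]

theorem Represents.set {k : ℕ} {b : Delta Γ m} (hu : Represents Rule v u)
    (hb : Fits Rule v k b) : Represents Rule v (u.set k b) := by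
  refine ⟨by simp [hu.1], fun k' d hk' => ?_⟩
  rcases eq_or_ne k k' with rfl | hne
  · obtain ⟨-, rfl⟩ : (∃ x, u[k]? = some x) ∧ b = d := by
      simpa [List.getElem?_set_self'] using hk'
    exact hb
  · exact hu.2 k' d (by rwa [List.getElem?_set_ne hne] at hk')

theorem Represents.exists_reflTransGen_set_pair
    (hrule : ∀ i, (Rule i).1.1 = (Rule i).2.1 ∨ (Rule i).1.2 = (Rule i).2.2)
    (hu : Represents Rule v u) (hj : j ≤ v.length) (hA : u[j]? = some A)
    (hB : u[j + 2]? = some B) (h₁ : ERel Rule A (.pair d e)) (h₂ : ERel Rule (.pair d e) B) :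
    ∃ v', ReflTransGen (SStep Rule) v v' ∧ Represents Rule v' (u.set (j + 1) (.pair d e)) := by
  obtain ⟨v₁, hv₁, hlen₁, hd₁, hrest₁, hA₁⟩ :=
    (hu.2 j A hA).exists_reflTransGen_of_erel_left hrule h₁
  have hB₁ : Fits Rule v₁ (j + 2) B :=
    (hu.2 _ B hB).congr hlen₁ fun k hk => hrest₁ k (by omega)
  obtain ⟨v₂, hv₂, hlen₂, he₂, hrest₂, hB₂⟩ := hB₁.exists_reflTransGen_of_erel_right hrule h₂
  refine ⟨v₂, hv₁.trans hv₂, by simp [hu.1, hlen₁, hlen₂], fun k b hk => ?_⟩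
  rcases eq_or_ne (j + 1) k with rfl | hk₁
  · rw [List.getElem?_set_self (by rw [hu.1]; omega)] at hk
    cases hk
    exact ⟨j, by omega, rfl, by rw [hrest₂ j (by omega), hd₁], he₂.symm⟩
  rw [List.getElem?_set_ne hk₁] at hk
  rcases eq_or_ne k j with rfl | hkj
  · rw [hA] at hk; cases hk
    exact hA₁.congr (by omega) fun k hk => hrest₂ k (by omega)
  rcases eq_or_ne k (j + 2) with rfl | hkj'
  · rw [hB] at hk; cases hk
    exact hB₂
  · exact (hu.2 k b hk).congr (by omega) fun k' hk' => by
      rw [hrest₂ k' (by omega), hrest₁ k' (by omega)]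

theorem Represents.exists_reflTransGen_of_diffOne
    (hrule : ∀ i, (Rule i).1.1 = (Rule i).2.1 ∨ (Rule i).1.2 = (Rule i).2.2)
    (hu : Represents Rule v u) (hd : DiffOne u u') (hc : u'.IsChain (ERel Rule)) :
    ∃ v', ReflTransGen (SStep Rule) v v' ∧ Represents Rule v' u' := by
  obtain ⟨k, a, b, hab, ha, rfl⟩ := hd.exists_set
  have hlen := hu.1
  have hk : k < u.length := (List.getElem?_eq_some_iff.mp ha).1
  have edge : ∀ k' x y, (u.set k b)[k']? = some x → (u.set k b)[k' + 1]? = some y →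
      ERel Rule x y := fun _ _ _ => hc.rel_of_getElem?
  have entry : ∀ k', k' < u.length → ∃ x, u[k']? = some x := fun k' hk' =>
    ⟨u[k'], List.getElem?_eq_getElem hk'⟩
  obtain ⟨j, rfl⟩ : ∃ j, k = j + 1 := by
    refine Nat.exists_eq_succ_of_ne_zero fun hk0 => ?_
    subst hk0
    obtain ⟨B, hB⟩ := entry 1 (by omega)
    have := (hu.2 1 B hB).eq_left_of_erel (edge 0 b B (by simp [hk]) (by simpa using hB))
    exact hab ((hu.2 0 a ha).eq_left_of_zero.trans this.symm)
  have hj : j ≤ v.length := by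
    by_contra hj
    obtain rfl : j = v.length + 1 := by omega
    obtain ⟨A, hA⟩ := entry (v.length + 1) (by omega)
    have := (hu.2 _ A hA).eq_right_of_erel
      (edge (v.length + 1) A b (by simpa using hA) (by simp [hk]))
    exact hab ((hu.2 _ a ha).eq_right_of_last.trans this.symm)
  obtain ⟨A, hA⟩ := entry j (by omega)
  obtain ⟨B, hB⟩ := entry (j + 2) (by omega)
  have h₁ : ERel Rule A b := edge j A b (by simpa using hA) (by simp [hk])
  have h₂ : ERel Rule b B := edge (j + 1) b B (by simp [hk]) (by simpa using hB)
  cases b with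
  | left => exact absurd h₁ ERel.not_left
  | right => exact absurd h₂ ERel.not_right
  | x i => exact ⟨v, .refl, hu.set ((hu.2 j A hA).x_of_erel hrule (hu.2 _ B hB) h₁ h₂)⟩
  | pair d e => exact hu.exists_reflTransGen_set_pair hrule hj hA hB h₁ h₂

theorem reflTransGen_sStep_of_hMove
    (hrule : ∀ i, (Rule i).1.1 = (Rule i).2.1 ∨ (Rule i).1.2 = (Rule i).2.2) {N : ℕ}
    {s t : List Γ} (h : ReflTransGen (HMove Rule N) (psi m s) (psi m t)) :
    ReflTransGen (SStep Rule) s t := by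
  suffices ∀ w, ReflTransGen (HMove Rule N) (psi m s) w →
      ∃ v, ReflTransGen (SStep Rule) s v ∧ Represents Rule v w by
    obtain ⟨v, hsv, hv⟩ := this _ h
    rwa [← hv.eq_of_psi]
  intro w hw
  induction hw with
  | refl => exact ⟨s, .refl, represents_psi s⟩
  | tail _ hmove ih =>
    obtain ⟨v, hsv, hv⟩ := ih
    obtain ⟨v', hvv', hv'⟩ := hv.exists_reflTransGen_of_diffOne hrule hmove.1 hmove.2.2
    exact ⟨v', hsv.trans hvv', hv'⟩

end Represents

theorem stmt11_general {Γ : Type} (m : ℕ)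
    (Rule : Fin m → (Γ × Γ) × (Γ × Γ))
    (hrule : ∀ i, (Rule i).1.1 = (Rule i).2.1 ∨ (Rule i).1.2 = (Rule i).2.2)
    (n : ℕ) (hn : 1 ≤ n) (s t : List Γ) (hs : s.length = n) :
    Relation.ReflTransGen (SStep Rule) s t ↔
      ∃ (l : ℕ) (u : ℕ → List (Delta Γ m)),
        u 0 = psi m s ∧ u l = psi m t ∧
        (∀ j ≤ l, (u j).length = n + 3 ∧ List.Chain' (ERel Rule) (u j)) ∧
        (∀ j < l, DiffOne (u j) (u (j + 1))) := by
  refine Iff.trans ?_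
    (exists_seq_iff_reflTransGen (P := IsHWord Rule (n + 3)) (r := DiffOne)).symm
  subst hs
  exact ⟨fun h => ⟨⟨length_psi s, isChain_psi (List.ne_nil_of_length_pos hn)⟩,
    reflTransGen_hMove_psi h⟩, fun h => reflTransGen_sStep_of_hMove hrule h.2⟩

/-- For words `s, t ∈ Γⁿ` (`n ≥ 1`): `s ⇔*_S t` iff `ψ(s)` can be transformed
into `ψ(t)` by a sequence of `H`-words over `H = (Δ, E)` of length `n + 3`,
each differing from the previous one in exactly one position. -/
theorem stmt11 {Γ : Type} [Fintype Γ] (m : ℕ)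
    (Rule : Fin m → (Γ × Γ) × (Γ × Γ))
    (hrule : ∀ i, (Rule i).1.1 = (Rule i).2.1 ∨ (Rule i).1.2 = (Rule i).2.2)
    (n : ℕ) (hn : 1 ≤ n) (s t : List Γ) (hs : s.length = n) (ht : t.length = n) :
    Relation.ReflTransGen (SStep Rule) s t ↔
      ∃ (l : ℕ) (u : ℕ → List (Delta Γ m)),
        u 0 = psi m s ∧ u l = psi m t ∧
        (∀ j ≤ l, (u j).length = n + 3 ∧ List.Chain' (ERel Rule) (u j)) ∧
        (∀ j < l, DiffOne (u j) (u (j + 1))) :=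
  stmt11_general m Rule hrule n hn s t hs
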